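/- Let k ≥ 1 be an integer, let τ_1 < τ_2 < … < τ_k be distinct real numbers, and let c_1, …, c_k be nonzero complex numbers. Define ψ(n) = Σ_{j=1}^{k} c_j n^{iτ_j} for positive integers n, where n^{iτ} = exp(iτ · log n). If ψ is multiplicative, i.e. ψ(1) = 1 and ψ(mn) = ψ(m) ψ(n) whenever gcd(m, n) = 1, then k = 1 and c_1 = 1. -/

import Mathlib

/-!
Fix `n` and a prime `p ∤ n`. Multiplicativity gives `ψ (p ^ t * n) = ψ (p ^ t) * ψ n` for every
`t`, i.e. `∑ⱼ cⱼ (n ^ (iτⱼ) - ψ n) zⱼ ^ t = 0` with `zⱼ = p ^ (iτⱼ)`. The `zⱼ` are distinct for all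
but finitely many `p`: `p ^ (iΔ) = 1` with `Δ ≠ 0` means `Δ log p ∈ 2πℤ`, and this holds for at
most one prime because the logarithms of distinct primes are linearly independent over `ℚ`.
For such `p` the Vandermonde system forces `n ^ (iτⱼ) = ψ n` for all `j`. If `k ≥ 2`, then
`n ^ (i(τ₁ - τ₀)) = 1` for `n = 2` and `n = 3`, which is impossible; so `k = 1`, and
`c₁ = ψ 1 = 1`.
-/

open Finset Complex

lemma exists_int_of_cexp_I_mul_eq {s t x : ℝ} (h : exp (I * s * x) = exp (I * t * x)) :
    ∃ a : ℤ, (s - t) * x = 2 * Real.pi * a := by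
  obtain ⟨a, ha⟩ := exp_eq_exp_iff_exists_int.mp h
  refine ⟨a, ofReal_injective (mul_right_cancel₀ I_ne_zero ?_)⟩
  push_cast
  linear_combination ha

lemma Nat.Prime.eq_of_int_mul_log_eq {p q : ℕ} (hp : p.Prime) (hq : q.Prime) {a b : ℤ}
    (ha : a ≠ 0) (h : (b : ℝ) * Real.log p = a * Real.log q) : p = q := by
  have hlogp : 0 < Real.log p := Real.log_pos (by exact_mod_cast hp.one_lt)
  have hlogq : 0 < Real.log q := Real.log_pos (by exact_mod_cast hq.one_lt)
  have hb : b ≠ 0 := by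
    rintro rfl
    simp only [Int.cast_zero, zero_mul, zero_eq_mul, Int.cast_eq_zero] at h
    exact h.elim ha hlogq.ne'
  have hpow : (p : ℝ) ^ b.natAbs = (q : ℝ) ^ a.natAbs := by
    refine Real.log_injOn_pos (Set.mem_Ioi.mpr (pow_pos (Nat.cast_pos.mpr hp.pos) _))
      (Set.mem_Ioi.mpr (pow_pos (Nat.cast_pos.mpr hq.pos) _)) ?_
    have := congrArg abs h
    rw [abs_mul, abs_mul, abs_of_pos hlogp, abs_of_pos hlogq] at this
    simpa [Real.log_pow, Nat.cast_natAbs] using this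
  exact (hp.pow_inj' hq (Int.natAbs_ne_zero.mpr hb) (Int.natAbs_ne_zero.mpr ha)
    (by exact_mod_cast hpow)).1

lemma Nat.Prime.eq_of_cexp_I_mul_log_eq {s t : ℝ} (hst : s ≠ t) {p q : ℕ}
    (hp : p.Prime) (hq : q.Prime)
    (hpe : exp (I * s * Real.log p) = exp (I * t * Real.log p))
    (hqe : exp (I * s * Real.log q) = exp (I * t * Real.log q)) : p = q := by
  obtain ⟨a, ha⟩ := exists_int_of_cexp_I_mul_eq hpe
  obtain ⟨b, hb⟩ := exists_int_of_cexp_I_mul_eq hqe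
  have hst' : s - t ≠ 0 := sub_ne_zero.mpr hst
  have ha0 : a ≠ 0 := by
    rintro rfl
    have hlogp : 0 < Real.log p := Real.log_pos (by exact_mod_cast hp.one_lt)
    rw [Int.cast_zero, mul_zero] at ha
    exact mul_ne_zero hst' hlogp.ne' ha
  refine hp.eq_of_int_mul_log_eq hq (b := b) ha0 (mul_left_cancel₀ hst' ?_)
  linear_combination (b : ℝ) * ha - (a : ℝ) * hb

lemma finite_setOf_prime_not_injective {ι : Type*} [Finite ι] {τ : ι → ℝ}
    (hτ : Function.Injective τ) :
    {p : ℕ | p.Prime ∧ ¬ Function.Injective fun l => exp (I * τ l * Real.log p)}.Finite := by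
  refine (Set.finite_iUnion fun l => Set.finite_iUnion fun l' =>
    (?_ : Set.Subsingleton {p : ℕ | p.Prime ∧ l ≠ l' ∧
      exp (I * τ l * Real.log p) = exp (I * τ l' * Real.log p)}).finite).subset ?_
  · rintro p ⟨hp, hll', hpe⟩ q ⟨hq, -, hqe⟩
    exact hp.eq_of_cexp_I_mul_log_eq (hτ.ne hll') hq hpe hqe
  · rintro p ⟨hp, hinj⟩
    obtain ⟨l, l', hpe, hll'⟩ := Function.not_injective_iff.mp hinj
    exact Set.mem_iUnion₂.mpr ⟨l, l', hp, hll', hpe⟩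

lemma exists_prime_not_dvd_injective {ι : Type*} [Finite ι] {τ : ι → ℝ}
    (hτ : Function.Injective τ) {n : ℕ} (hn : 0 < n) :
    ∃ p : ℕ, p.Prime ∧ ¬ p ∣ n ∧ Function.Injective fun l => exp (I * τ l * Real.log p) := by
  obtain ⟨p, ⟨hp, hgood⟩, hpn⟩ := (Nat.infinite_setOfPred_prime.sdiff
    (finite_setOf_prime_not_injective hτ)).sdiff (Set.finite_Iic n) |>.nonempty
  exact ⟨p, hp, fun hdvd => hpn (Nat.le_of_dvd hn hdvd), not_not.mp fun h => hgood ⟨hp, h⟩⟩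

lemma cexp_I_mul_log_mul (τ : ℝ) {x y : ℝ} (hx : x ≠ 0) (hy : y ≠ 0) :
    exp (I * τ * Real.log (x * y)) = exp (I * τ * Real.log x) * exp (I * τ * Real.log y) := by
  rw [Real.log_mul hx hy, ofReal_add, mul_add, exp_add]

lemma cexp_I_mul_log_pow (τ x : ℝ) (t : ℕ) :
    exp (I * τ * Real.log (x ^ t)) = exp (I * τ * Real.log x) ^ t := by
  rw [Real.log_pow, ← exp_nat_mul]
  push_cast
  ring_nf

theorem cexp_I_mul_log_eq_of_multiplicative {k : ℕ} {τ : Fin k → ℝ} {c : Fin k → ℂ}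
    {ψ : ℕ → ℂ} (hτ : Function.Injective τ) (hc : ∀ j, c j ≠ 0)
    (hψ : ∀ n : ℕ, 0 < n → ψ n = ∑ j, c j * exp (I * τ j * Real.log n))
    (hmul : ∀ m n : ℕ, 0 < m → 0 < n → Nat.Coprime m n → ψ (m * n) = ψ m * ψ n)
    (n : ℕ) (hn : 0 < n) (j : Fin k) :
    exp (I * τ j * Real.log n) = ψ n := by
  obtain ⟨p, hp, hpn, hz⟩ := exists_prime_not_dvd_injective hτ hn
  have hw : (fun l => c l * (exp (I * τ l * Real.log n) - ψ n)) = 0 := by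
    refine Matrix.eq_zero_of_forall_pow_sum_mul_pow_eq_zero hz fun t => ?_
    have hpt : 0 < p ^ (t : ℕ) := pow_pos hp.pos _
    have h := hmul _ _ hpt hn (Nat.Coprime.pow_left _ (hp.coprime_iff_not_dvd.mpr hpn))
    rw [hψ _ (Nat.mul_pos hpt hn), hψ _ hpt] at h
    push_cast at h
    simp only [cexp_I_mul_log_mul _ (pow_ne_zero _ (Nat.cast_ne_zero.mpr hp.ne_zero))
      (Nat.cast_ne_zero.mpr hn.ne'), cexp_I_mul_log_pow, sum_mul] at h
    rw [← sub_eq_zero, ← sum_sub_distrib] at h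
    rw [← h]
    exact sum_congr rfl fun l _ => by ring
  simpa [hc j, sub_eq_zero] using congrFun hw j

/-- Lemma on recovery from the one-parameter group: a nontrivial finite linear
combination of the functions `n ↦ n^{iτ}` with distinct frequencies and nonzero
coefficients is multiplicative only when it is a single term `n ↦ n^{iτ₁}` with
coefficient `1`. -/
theorem stmt_19 :
    ∀ (k : ℕ), 1 ≤ k →
    ∀ (τ : Fin k → ℝ), StrictMono τ →
    ∀ (c : Fin k → ℂ), (∀ j, c j ≠ 0) →
    ∀ ψ : ℕ → ℂ,
      (∀ n : ℕ, 0 < n →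
        ψ n = ∑ j, c j * Complex.exp (Complex.I * (τ j) * Real.log n)) →
      ψ 1 = 1 →
      (∀ m n : ℕ, 0 < m → 0 < n → Nat.Coprime m n → ψ (m * n) = ψ m * ψ n) →
      k = 1 ∧ ∀ j, c j = 1 := by
  intro k hk τ hτ c hc ψ hψ h1 hmul
  have key := cexp_I_mul_log_eq_of_multiplicative hτ.injective hc hψ hmul
  obtain rfl : k = 1 := by
    by_contra hk1
    have h01 : τ ⟨0, hk⟩ < τ ⟨1, by omega⟩ := hτ (Fin.mk_lt_mk.mpr one_pos)
    have h23 := Nat.prime_two.eq_of_cexp_I_mul_log_eq h01.ne Nat.prime_three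
      (by rw [key 2 two_pos, key 2 two_pos]) (by rw [key 3 three_pos, key 3 three_pos])
    norm_num at h23
  refine ⟨rfl, fun j => ?_⟩
  simpa [h1, Subsingleton.elim j 0] using (hψ 1 one_pos).symm
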